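/- Let g, g' ∈ Aut(T), let π, π' be their restrictions to the set V_T of first-level vertices, and let U_g be a set of representatives of the ⟨π⟩-orbits on the internal first-level vertices. Then g and g' are conjugate in Aut(T) if and only if: (a) there exists σ ∈ Aut(T)|_{V_T} (the set of restrictions to V_T of elements of Aut(T)) with π' = σ ∘ π ∘ σ⁻¹, and (b) for every v ∈ U_g there exists a rooted tree isomorphism t_v: T_v → T_{σ(v)} such that [(g')^ℓ]_{σ(v)} = t_v ∘ [g^ℓ]_v ∘ t_v⁻¹, where ℓ is the length of the ⟨π⟩-orbit of v. -/

import Mathlib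

open Function

structure FRTree : Type 1 where
  V : Type
  [fintypeV : Fintype V]
  [decEqV : DecidableEq V]
  root : V
  parent : V → V
  parent_root : parent root = root
  reaches_root : ∀ v : V, ∃ n : ℕ, parent^[n] v = root

attribute [instance] FRTree.fintypeV FRTree.decEqV

namespace FRTree

/-- `w` is a child of `u`. -/
def IsChild (T : FRTree) (w u : T.V) : Prop := w ≠ T.root ∧ T.parent w = u

instance (T : FRTree) (w u : T.V) : Decidable (T.IsChild w u) :=
  inferInstanceAs (Decidable (w ≠ T.root ∧ T.parent w = u))

/-- A vertex is internal if it has at least one child. -/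
def Internal (T : FRTree) (u : T.V) : Prop := ∃ w, T.IsChild w u

/-- A leaf is a vertex without children. -/
def IsLeaf (T : FRTree) (u : T.V) : Prop := ¬ T.Internal u

/-- Two (non-root) vertices are siblings if they have the same parent. -/
def Siblings (T : FRTree) (u v : T.V) : Prop :=
  u ≠ T.root ∧ v ≠ T.root ∧ T.parent u = T.parent v

/-- The set of vertices of the subtree `T_u`:  `u` together with all of its descendants. -/
def Desc (T : FRTree) (u : T.V) : Set T.V := {v | ∃ n : ℕ, T.parent^[n] v = u}

/-- First level vertices. -/
def FirstLevel (T : FRTree) (v : T.V) : Prop := v ≠ T.root ∧ T.parent v = T.root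

/-- The children of a vertex, as a finset. -/
def children (T : FRTree) (u : T.V) : Finset T.V :=
  Finset.univ.filter (fun w => T.IsChild w u)

end FRTree

open FRTree

/-- Rooted tree homomorphism: sends root to root, non-root vertices to non-root
vertices and commutes with taking the parent.  (This is the same as a graph
homomorphism between the underlying trees sending root to root.) -/
def IsHom (T P : FRTree) (φ : T.V → P.V) : Prop :=
  φ T.root = P.root ∧
  ∀ v : T.V, v ≠ T.root → φ v ≠ P.root ∧ P.parent (φ v) = φ (T.parent v)

/-- Isomorphism of rooted trees. -/
def IsIsom (T P : FRTree) (φ : T.V → P.V) : Prop :=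
  IsHom T P φ ∧ Function.Bijective φ

/-- The automorphism group of a rooted tree, as a subgroup of the permutations of the vertices. -/
def FRTree.Aut (T : FRTree) : Subgroup (Equiv.Perm T.V) where
  carrier := {g : Equiv.Perm T.V | IsHom T T ⇑g}
  one_mem' := ⟨rfl, fun v hv => ⟨hv, rfl⟩⟩
  mul_mem' := by
    rintro a b ⟨ha0, ha⟩ ⟨hb0, hb⟩
    refine ⟨?_, fun v hv => ?_⟩
    · simp only [Equiv.Perm.coe_mul, Function.comp_apply, hb0, ha0]
    · obtain ⟨hb1, hb2⟩ := hb v hv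
      obtain ⟨ha1, ha2⟩ := ha (b v) hb1
      refine ⟨by simpa using ha1, ?_⟩
      simp only [Equiv.Perm.coe_mul, Function.comp_apply]
      rw [ha2, hb2]
  inv_mem' := by
    rintro a ⟨ha0, ha⟩
    refine ⟨a.injective (by simp [ha0]), fun v hv => ?_⟩
    have h1 : a⁻¹ v ≠ T.root := by
      intro h
      apply hv
      have h2 := congrArg a h
      rwa [← Equiv.Perm.mul_apply, mul_inv_cancel, Equiv.Perm.one_apply, ha0] at h2
    obtain ⟨_, h3⟩ := ha (a⁻¹ v) h1
    rw [← Equiv.Perm.mul_apply, mul_inv_cancel, Equiv.Perm.one_apply] at h3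
    exact ⟨h1, a.injective (by rw [← h3, ← Equiv.Perm.mul_apply, mul_inv_cancel, Equiv.Perm.one_apply])⟩

/-- `τ` restricts to an isomorphism from the subtree `T_u` onto the subtree `T'_{u'}`.
(The values of `τ` outside of `T_u` are irrelevant.) -/
def IsSubtreeIso (T T' : FRTree) (u : T.V) (u' : T'.V) (τ : T.V → T'.V) : Prop :=
  τ u = u' ∧ Set.BijOn τ (T.Desc u) (T'.Desc u') ∧
  ∀ w ∈ T.Desc u, w ≠ u → τ w ≠ u' ∧ T'.parent (τ w) = τ (T.parent w)

/-- A tree composition (`P`-composition of `T`): a surjective rooted tree homomorphism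
satisfying the regularity condition. -/
def IsComposition (T P : FRTree) (φ : T.V → P.V) : Prop :=
  IsHom T P φ ∧ Function.Surjective φ ∧
  ∀ u v : T.V, u ≠ v → T.Internal u → T.Internal v → T.Siblings u v → φ u = φ v →
    ∃ g ∈ T.Aut, g u = v ∧ ∀ w ∈ T.Desc u, φ (g w) = φ w
/-- Equivalence of the restrictions `φ_u : T_u → P_{φ u}` and `ψ_{u'} : T'_{u'} → P'_{ψ u'}`
of two tree compositions. -/
def RestrEquiv (T P T' P' : FRTree) (φ : T.V → P.V) (ψ : T'.V → P'.V)
    (u : T.V) (u' : T'.V) : Prop :=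
  ∃ (τ : T.V → T'.V) (ω : P.V → P'.V),
    IsSubtreeIso T T' u u' τ ∧ IsSubtreeIso P P' (φ u) (ψ u') ω ∧
    ∀ w ∈ T.Desc u, ω (φ w) = ψ (τ w)

/-- Strict equivalence of the restrictions `δ_u : T_u → Q_{δ u}` and
`δ'_{u'} : T'_{u'} → Q_{δ' u'}` of two maps into the same tree `Q`
(the isomorphism on the target side is the identity). -/
def RestrStrictEquiv (T Q T' : FRTree) (δ : T.V → Q.V) (δ' : T'.V → Q.V)
    (u : T.V) (u' : T'.V) : Prop :=
  δ u = δ' u' ∧ ∃ τ : T.V → T'.V, IsSubtreeIso T T' u u' τ ∧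
    ∀ w ∈ T.Desc u, δ' (τ w) = δ w

/-- Equivalence of tree compositions. -/
def CompEquiv (T P T' P' : FRTree) (φ : T.V → P.V) (ψ : T'.V → P'.V) : Prop :=
  ∃ (τ : T.V → T'.V) (ω : P.V → P'.V),
    IsIsom T T' τ ∧ IsIsom P P' ω ∧ ω ∘ φ = ψ ∘ τ

/-- Strict equivalence of tree compositions with the same target tree. -/
def StrictEquiv (T T' P : FRTree) (φ : T.V → P.V) (ψ : T'.V → P.V) : Prop :=
  ∃ τ : T.V → T'.V, IsIsom T T' τ ∧ ψ ∘ τ = φ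

/-- `α : P → Q` is the quotient of the tree composition `φ : T → P`. -/
def IsQuotient (T P Q : FRTree) (φ : T.V → P.V) (α : P.V → Q.V) : Prop :=
  IsComposition P Q α ∧
  -- (a) for every internal `x ∈ P`, all children of `x` which are leaves are sent by `α`
  -- to a single vertex, which is the unique child of `α x` that is a leaf
  (∀ x : P.V, P.Internal x → ∀ y y' : P.V, P.IsChild y x → P.IsLeaf y →
    P.IsChild y' x → P.IsLeaf y' → α y = α y') ∧
  (∀ x y : P.V, P.Internal x → P.IsChild y x → P.IsLeaf y →
    Q.IsChild (α y) (α x) ∧ Q.IsLeaf (α y) ∧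
      ∀ z : Q.V, Q.IsChild z (α x) → Q.IsLeaf z → z = α y) ∧
  -- (b) distinct internal siblings of `Q` separate inequivalent restrictions of `φ`
  (∀ a b : Q.V, a ≠ b → Q.Internal a → Q.Internal b → Q.Siblings a b →
    ∀ u v : T.V, α (φ u) = a → α (φ v) = b → ¬ RestrEquiv T P T P φ φ u v) ∧
  -- (c) vertices with the same image under `α ∘ φ` have equivalent restrictions of `φ`,
  -- and strictly equivalent restrictions of `α ∘ φ`
  (∀ u w : T.V, T.Internal u → T.Internal w → α (φ u) = α (φ w) →
    RestrEquiv T P T P φ φ u w ∧ RestrStrictEquiv T Q T (α ∘ φ) (α ∘ φ) u w)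

/-- The type `|φ⁻¹|` of a tree composition: `|φ⁻¹|(root) = 0` and, for `y` non-root with
parent `x`, `|φ⁻¹|(y) = |φ⁻¹(y) ∩ Ch(u)|` where `u` is any vertex with `φ u = x` (for a tree
composition this number does not depend on the choice of `u`, so it equals the `sSup` below). -/
noncomputable def typeOf (T P : FRTree) (φ : T.V → P.V) (y : P.V) : ℕ :=
  if y = P.root then 0
  else sSup {n : ℕ | ∃ u : T.V, φ u = P.parent y ∧
    n = (Finset.univ.filter (fun w => T.IsChild w u ∧ φ w = y)).card}

/-- The partition `λ^b` associated to a non-root vertex `b` of the quotient tree: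
the multiset of the numbers `|φ⁻¹|(y)`, for `y` ranging over the children of `x`
with `α y = b` (where `x` is any vertex of `P` with `α x = ` parent of `b`). -/
noncomputable def assocPartition (T P Q : FRTree) (φ : T.V → P.V) (α : P.V → Q.V)
    (x : P.V) (b : Q.V) : Multiset ℕ :=
  ((Finset.univ.filter (fun y => P.IsChild y x ∧ α y = b)).val).map (typeOf T P φ)

/-- `Λ` is the partitional labeling of the quotient tree `Q` associated to the tree
composition `φ : T → P` (with quotient map `α : P → Q`). -/
def IsAssocLabeling (T P Q : FRTree) (φ : T.V → P.V) (α : P.V → Q.V)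
    (Λ : Q.V → Multiset ℕ) : Prop :=
  IsQuotient T P Q φ α ∧
  ∀ b : Q.V, b ≠ Q.root → ∀ x : P.V, α x = Q.parent b →
    Λ b = assocPartition T P Q φ α x b

/-- A partitional labeling: every non-root vertex is labeled by an integer partition
(a multiset of positive integers). -/
def IsPartitionalLabeling (Q : FRTree) (Λ : Q.V → Multiset ℕ) : Prop :=
  ∀ a : Q.V, a ≠ Q.root → ∀ n ∈ Λ a, 0 < n

/-- Isomorphism of the restrictions of two partitional labelings to the subtrees `Q_a` and
`Q'_b`, the roots `a`, `b` being regarded as unlabeled. -/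
def LabelRestrIso (Q Q' : FRTree) (Λ : Q.V → Multiset ℕ) (Ξ : Q'.V → Multiset ℕ)
    (a : Q.V) (b : Q'.V) : Prop :=
  ∃ γ : Q.V → Q'.V, IsSubtreeIso Q Q' a b γ ∧
    ∀ c ∈ Q.Desc a, c ≠ a → Λ c = Ξ (γ c)

/-- A tree of partitions. -/
def IsTreeOfPartitions (Q : FRTree) (Λ : Q.V → Multiset ℕ) : Prop :=
  IsPartitionalLabeling Q Λ ∧
  (∀ x y y' : Q.V, Q.IsChild y x → Q.IsLeaf y → Q.IsChild y' x → Q.IsLeaf y' → y = y') ∧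
  (∀ a b : Q.V, a ≠ b → Q.Internal a → Q.Internal b → Q.Siblings a b →
    ¬ LabelRestrIso Q Q Λ Λ a b)

/-- Isomorphism of partitional labelings. -/
def LabelIso (Q Q' : FRTree) (Λ : Q.V → Multiset ℕ) (Ξ : Q'.V → Multiset ℕ) : Prop :=
  ∃ γ : Q.V → Q'.V, IsIsom Q Q' γ ∧ ∀ a : Q.V, a ≠ Q.root → Λ a = Ξ (γ a)

/-- `δ : T → Q` is a realization of the tree of partitions `(Λ, Q)` as a tree of
partitions of `T`. -/
def IsRealization (T Q : FRTree) (Λ : Q.V → Multiset ℕ) (δ : T.V → Q.V) : Prop :=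
  IsComposition T Q δ ∧
  ∀ a : Q.V, Q.Internal a → ∀ u : T.V, δ u = a →
    ∑ b ∈ Q.children a, (Λ b).sum = (T.children u).card

/-- `(Λ, Q)` belongs to `Par(T)`. -/
def InParT (T Q : FRTree) (Λ : Q.V → Multiset ℕ) : Prop :=
  IsTreeOfPartitions Q Λ ∧ ∃ δ : T.V → Q.V, IsRealization T Q Λ δ

/-- The compatibility condition on `α : P → Q` entering the definition of `Par(T, P)`:
at every vertex of `α⁻¹(a)` the numbers of children is the sum of the lengths of the
partitions labeling the children of `a`. -/
def LengthCond (P Q : FRTree) (Λ : Q.V → Multiset ℕ) (α : P.V → Q.V) : Prop :=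
  ∀ a : Q.V, Q.Internal a → ∀ x : P.V, α x = a →
    ∑ b ∈ Q.children a, Multiset.card (Λ b) = (P.children x).card

/-- `(Λ, Q)` belongs to `Par(T, P)`. -/
def InParTP (T P Q : FRTree) (Λ : Q.V → Multiset ℕ) : Prop :=
  InParT T Q Λ ∧ ∃ α : P.V → Q.V, IsComposition P Q α ∧ LengthCond P Q Λ α
/-- A common refinement of the tree compositions `φ : T → P` and `ψ : T → M`. -/
def IsCommonRefinement (T P M R : FRTree) (φ : T.V → P.V) (ψ : T.V → M.V)
    (ρ : T.V → R.V) (ϑ : R.V → P.V) (τ : R.V → M.V) : Prop :=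
  IsComposition T R ρ ∧ IsComposition R P ϑ ∧ IsComposition R M τ ∧
  ϑ ∘ ρ = φ ∧ τ ∘ ρ = ψ

/-- Equivalence of the restricted common refinements `ρ_u` (of `(φ_u, ψ_u)`) and
`ρ_v` (of `(φ_v, ψ_v)`), where `ρ u = a`, `ρ v = b`, `ϑ a = ϑ b` and `τ a = τ b`. -/
def RestrRefEquiv (T P M R : FRTree) (φ : T.V → P.V) (ψ : T.V → M.V)
    (ρ : T.V → R.V) (ϑ : R.V → P.V) (τ : R.V → M.V)
    (u v : T.V) (a b : R.V) : Prop :=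
  ∃ (ζ : T.V → T.V) (γ : R.V → R.V),
    IsSubtreeIso T T u v ζ ∧ IsSubtreeIso R R a b γ ∧
    (∀ w ∈ T.Desc u, φ (ζ w) = φ w) ∧
    (∀ w ∈ T.Desc u, ψ (ζ w) = ψ w) ∧
    (∀ w ∈ T.Desc u, ρ (ζ w) = γ (ρ w)) ∧
    (∀ r ∈ R.Desc a, ϑ (γ r) = ϑ r) ∧
    (∀ r ∈ R.Desc a, τ (γ r) = τ r)

/-- The coarseness condition for a common refinement. -/
def Coarseness (T P M R : FRTree) (φ : T.V → P.V) (ψ : T.V → M.V)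
    (ρ : T.V → R.V) (ϑ : R.V → P.V) (τ : R.V → M.V) : Prop :=
  (∀ a b : R.V, a ≠ b → R.Internal a → R.Internal b → R.Siblings a b →
    ϑ a = ϑ b → τ a = τ b →
    ∀ u v : T.V, ρ u = a → ρ v = b →
      ¬ RestrRefEquiv T P M R φ ψ ρ ϑ τ u v a b) ∧
  (∀ a b : R.V, a ≠ b → R.IsLeaf a → R.IsLeaf b → R.Siblings a b →
    ¬ (ϑ a = ϑ b ∧ τ a = τ b))

/-- Equivalence of two common refinements of the same couple `(φ, ψ)` of tree
compositions of `T`. -/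
def RefEquiv (T P M R R' : FRTree) (φ : T.V → P.V) (ψ : T.V → M.V)
    (ρ : T.V → R.V) (ϑ : R.V → P.V) (τ : R.V → M.V)
    (ρ' : T.V → R'.V) (ϑ' : R'.V → P.V) (τ' : R'.V → M.V) : Prop :=
  ∃ (ζ : T.V → T.V) (γ : R.V → R'.V),
    IsIsom T T ζ ∧ IsIsom R R' γ ∧
    φ ∘ ζ = φ ∧ ψ ∘ ζ = ψ ∧ ρ' ∘ ζ = γ ∘ ρ ∧ ϑ' ∘ γ = ϑ ∧ τ' ∘ γ = τ

/-- The orbit of the tree composition `φ` under the action `g • φ = φ ∘ g⁻¹` of `Aut T`. -/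
def OrbitSet (T P : FRTree) (φ : T.V → P.V) : Type :=
  {ψ : T.V → P.V // ∃ g ∈ T.Aut, ψ = φ ∘ ⇑g⁻¹}

/-- The action of `Aut T` on the orbit of `φ`. -/
def orbAct (T P : FRTree) (φ : T.V → P.V) (g : T.Aut)
    (ψ : OrbitSet T P φ) : OrbitSet T P φ :=
  ⟨ψ.1 ∘ ⇑((g : Equiv.Perm T.V))⁻¹, by
    obtain ⟨h, hh, hψ⟩ := ψ.2
    refine ⟨(g : Equiv.Perm T.V) * h, mul_mem g.2 hh, ?_⟩
    rw [hψ]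
    funext x
    simp [Function.comp, mul_inv_rev]⟩

/-- The permutation representation `M^{|φ⁻¹|}` of `Aut T` on the (complex functions on
the) orbit of the tree composition `φ`. -/
noncomputable def permRep (T P : FRTree) (φ : T.V → P.V) :
    Representation ℂ (T.Aut) (OrbitSet T P φ → ℂ) where
  toFun g :=
    { toFun := fun F ψ => F (orbAct T P φ g⁻¹ ψ)
      map_add' := fun _ _ => rfl
      map_smul' := fun _ _ => rfl }
  map_one' := by
    refine LinearMap.ext fun F => funext fun ψ => ?_
    show F (orbAct T P φ 1⁻¹ ψ) = F ψ
    have h : orbAct T P φ 1⁻¹ ψ = ψ := Subtype.ext (funext fun x => by simp [orbAct])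
    rw [h]
  map_mul' := by
    intro a b
    refine LinearMap.ext fun F => funext fun ψ => ?_
    show F (orbAct T P φ (a * b)⁻¹ ψ) = F (orbAct T P φ b⁻¹ (orbAct T P φ a⁻¹ ψ))
    have h : orbAct T P φ (a * b)⁻¹ ψ = orbAct T P φ b⁻¹ (orbAct T P φ a⁻¹ ψ) :=
      Subtype.ext (funext fun x => by simp [orbAct, mul_inv_rev])
    rw [h]

/-- Equivalence of two representations. -/
def RepEquiv {G : Type*} [Group G] {V W : Type*}
    [AddCommGroup V] [Module ℂ V] [AddCommGroup W] [Module ℂ W]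
    (ρ : Representation ℂ G V) (σ : Representation ℂ G W) : Prop :=
  ∃ e : V ≃ₗ[ℂ] W, ∀ (g : G) (v : V), e (ρ g v) = σ g (e v)

/-- Irreducibility of a representation. -/
def IsIrreducibleRep {G V : Type*} [Group G] [AddCommGroup V] [Module ℂ V]
    (ρ : Representation ℂ G V) : Prop :=
  (∃ v : V, v ≠ 0) ∧
  ∀ U : Submodule ℂ V, (∀ g : G, ∀ v ∈ U, ρ g v ∈ U) → U = ⊥ ∨ U = ⊤

/-- The space of equivariant linear maps between two representations; when `ρ` is
irreducible, its dimension is the multiplicity of `ρ` in `σ`. -/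
def equivariantHoms {G : Type*} [Group G] {V W : Type*}
    [AddCommGroup V] [Module ℂ V] [AddCommGroup W] [Module ℂ W]
    (ρ : Representation ℂ G V) (σ : Representation ℂ G W) :
    Submodule ℂ (V →ₗ[ℂ] W) where
  carrier := {f | ∀ (g : G) (v : V), f (ρ g v) = σ g (f v)}
  add_mem' := by
    intro a b ha hb g v
    simp [ha g v, hb g v]
  zero_mem' := by intro g v; simp
  smul_mem' := by
    intro c f hf g v
    simp [hf g v]

/-- The stabilizer `K_φ` of a tree composition `φ` in `Aut T`. -/
def stab (T P : FRTree) (φ : T.V → P.V) : Subgroup (T.Aut) where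
  carrier := {g | ∀ x : T.V, φ ((g : Equiv.Perm T.V) x) = φ x}
  one_mem' := fun _ => rfl
  mul_mem' := by
    intro a b ha hb x
    simp only [Subgroup.coe_mul, Equiv.Perm.mul_apply]
    rw [ha ((b : Equiv.Perm T.V) x), hb x]
  inv_mem' := by
    intro a ha x
    have := ha (((a : Equiv.Perm T.V))⁻¹ x)
    simp only [Equiv.Perm.coe_inv, Equiv.apply_symm_apply] at this
    simpa using this.symm

/-- The space of the representation of `G` induced by the character `χ` of the
subgroup `K`: complex functions on `G` which are `χ`-covariant for right translation
by `K`; `G` acts by left translation. -/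
noncomputable def IndSpace (G : Type*) [Group G] (K : Subgroup G) (χ : K →* ℂ) :
    Submodule ℂ (G → ℂ) where
  carrier := {f | ∀ (g : G) (k : K), f (g * k) = χ k * f g}
  add_mem' := by
    intro a b ha hb g k
    simp only [Pi.add_apply, ha g k, hb g k]
    ring
  zero_mem' := by intro g k; simp
  smul_mem' := by
    intro c f hf g k
    simp only [Pi.smul_apply, smul_eq_mul, hf g k]
    ring

/-- The representation of `G` induced by the character `χ` of the subgroup `K`. -/
noncomputable def indRep (G : Type*) [Group G] (K : Subgroup G) (χ : K →* ℂ) :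
    Representation ℂ G (IndSpace G K χ) where
  toFun g :=
    { toFun := fun f => ⟨fun x => (f : G → ℂ) (g⁻¹ * x), by
        intro x k
        have h := f.2 (g⁻¹ * x) k
        simpa [mul_assoc] using h⟩
      map_add' := by intro a b; apply Subtype.ext; funext x; rfl
      map_smul' := by intro c a; apply Subtype.ext; funext x; rfl }
  map_one' := by
    refine LinearMap.ext fun f => Subtype.ext (funext fun x => ?_)
    simp
  map_mul' := by
    intro a b
    refine LinearMap.ext fun f => Subtype.ext (funext fun x => ?_)
    simp [mul_assoc]

/-- A sibling swap: an automorphism of order two exchanging the subtrees rooted at two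
distinct siblings `u`, `v` and fixing everything else.  The sign representation of
`Aut T` is the unique homomorphism `Aut T →* ℂ` taking the value `-1` at every
sibling swap. -/
def IsSiblingSwap (T : FRTree) (g : Equiv.Perm T.V) : Prop :=
  ∃ u v : T.V, u ≠ v ∧ T.Siblings u v ∧ g u = v ∧
    (∀ w : T.V, w ∉ T.Desc u → w ∉ T.Desc v → g w = w) ∧ g * g = 1

/-- The conjugate (transpose) of an integer partition, encoded as a multiset. -/
def conjP (m : Multiset ℕ) : Multiset ℕ :=
  ((Multiset.range m.sum).map fun i => Multiset.card (m.filter fun p => i < p)).filter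
    fun n => 0 < n

/-- Two tree compositions of the same tree have `0-1` intersection. -/
def ZeroOneIntersection (T P M : FRTree) (φ : T.V → P.V) (ψ : T.V → M.V) : Prop :=
  ∀ v : T.V, T.Internal v → ∀ x : P.V, ∀ y : M.V,
    P.IsChild x (φ v) → M.IsChild y (ψ v) →
    {w : T.V | φ w = x ∧ ψ w = y}.Subsingleton

/-- `φᵗ : T → Pᵗ` (with quotient `αᵗ`) is a transpose of the tree composition
`φ : T → P` with quotient `α : P → Q` and associated tree of partitions `Λ`. -/
def IsTranspose (T P Q Pt : FRTree) (φ : T.V → P.V) (α : P.V → Q.V)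
    (Λ : Q.V → Multiset ℕ) (φt : T.V → Pt.V) (αt : Pt.V → Q.V) : Prop :=
  IsComposition T Pt φt ∧
  IsAssocLabeling T Pt Q φt αt (fun a => conjP (Λ a)) ∧
  (αt ∘ φt = α ∘ φ) ∧
  ZeroOneIntersection T P Pt φ φt

set_option synthInstance.maxHeartbeats 400000 in
/-- The multiplicity of the irreducible representation `ρ` inside `σ`: the dimension of
the space of equivariant linear maps. -/
noncomputable def repMultiplicity {G : Type*} [Group G] {V W : Type*}
    [AddCommGroup V] [Module ℂ V] [AddCommGroup W] [Module ℂ W]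
    (ρ : Representation ℂ G V) (σ : Representation ℂ G W) : ℕ :=
  Module.finrank ℂ ↥(equivariantHoms ρ σ)

/-
A conjugator restricts to `σ` on the first level and to the isomorphisms `t_v`. Conversely, a
conjugator `t` is glued from isomorphisms between first-level subtrees: on `T_{π^n(v)}`, for
`v ∈ U_g`, it is `(g')^n ∘ t_v ∘ g^{-n}`, and on a first-level leaf it is `σ`. This does not
depend on `n`: two exponents reaching the same vertex differ by a multiple of `ℓ`, and `t_v`
intertwines `g^ℓ` with `(g')^ℓ` on `T_v`. That independence is exactly what makes the glued map
intertwine `g` with `g'`.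
-/

lemma IsSubtreeIso.comp {T T' T'' : FRTree} {u : T.V} {u' : T'.V} {u'' : T''.V}
    {τ : T.V → T'.V} {τ' : T'.V → T''.V} (h' : IsSubtreeIso T' T'' u' u'' τ')
    (h : IsSubtreeIso T T' u u' τ) : IsSubtreeIso T T'' u u'' (τ' ∘ τ) := by
  obtain ⟨hu, hbij, hpar⟩ := h
  obtain ⟨hu', hbij', hpar'⟩ := h'
  refine ⟨by rw [Function.comp_apply, hu, hu'], hbij'.comp hbij, fun w hw hwu => ?_⟩
  have hτw := hbij.mapsTo hw
  obtain ⟨hne, hp⟩ := hpar w hw hwu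
  obtain ⟨hne', hp'⟩ := hpar' (τ w) hτw hne
  exact ⟨hne', by rw [Function.comp_apply, hp', hp, Function.comp_apply]⟩

namespace FRTree

variable {T : FRTree}

lemma iterate_parent_root (T : FRTree) (n : ℕ) : T.parent^[n] T.root = T.root :=
  Function.iterate_fixed T.parent_root n

lemma ne_root_of_mem_desc {u x : T.V} (hu : u ≠ T.root) (hx : x ∈ T.Desc u) :
    x ≠ T.root := by
  rintro rfl
  obtain ⟨n, hn⟩ := hx
  exact hu (by rw [← hn, iterate_parent_root])

lemma parent_mem_desc {u x : T.V} (hx : x ∈ T.Desc u) (hxu : x ≠ u) :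
    T.parent x ∈ T.Desc u := by
  obtain ⟨_ | n, hn⟩ := hx
  · exact absurd hn hxu
  · exact ⟨n, hn⟩

lemma eq_of_mem_desc_of_isLeaf {u x : T.V} (hu : u ≠ T.root) (hl : T.IsLeaf u)
    (hx : x ∈ T.Desc u) : x = u := by
  obtain ⟨n, hn⟩ := hx
  induction n generalizing x with
  | zero => exact hn
  | succ n ih =>
    have hpx : T.parent x = u := ih hn
    have hxr : x ≠ T.root := by
      rintro rfl
      exact hu (by rw [← hpx, T.parent_root])
    exact absurd ⟨x, hxr, hpx⟩ hl

lemma exists_firstLevel_mem_desc {x : T.V} (hx : x ≠ T.root) :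
    ∃ w, T.FirstLevel w ∧ x ∈ T.Desc w := by
  classical
  have hne : Nat.find (T.reaches_root x) ≠ 0 := fun h =>
    hx (by simpa [h] using Nat.find_spec (T.reaches_root x))
  obtain ⟨n, hn⟩ := Nat.exists_eq_succ_of_ne_zero hne
  refine ⟨T.parent^[n] x, ⟨Nat.find_min (T.reaches_root x) (by omega), ?_⟩, n, rfl⟩
  rw [← Function.iterate_succ_apply' T.parent n, ← hn]
  exact Nat.find_spec (T.reaches_root x)

lemma eq_of_mem_desc_of_firstLevel {w w' x : T.V} (hw : T.FirstLevel w)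
    (hw' : T.FirstLevel w') (hx : x ∈ T.Desc w) (hx' : x ∈ T.Desc w') : w = w' := by
  obtain ⟨a, ha⟩ := hx
  obtain ⟨b, hb⟩ := hx'
  wlog hab : a ≤ b generalizing w w' a b
  · exact (this hw' hw b hb a ha (le_of_not_ge hab)).symm
  obtain ⟨_ | k, rfl⟩ := Nat.exists_eq_add_of_le hab
  · exact ha.symm.trans hb
  · rw [add_comm, Function.iterate_add_apply, ha, Function.iterate_succ_apply, hw.2,
      iterate_parent_root] at hb
    exact absurd hb.symm hw'.1

variable {g : Equiv.Perm T.V}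

lemma apply_root_of_mem_aut (hg : g ∈ T.Aut) : g T.root = T.root := hg.1

lemma parent_apply_of_mem_aut (hg : g ∈ T.Aut) (v : T.V) :
    T.parent (g v) = g (T.parent v) := by
  by_cases hv : v = T.root
  · rw [hv, apply_root_of_mem_aut hg, T.parent_root, apply_root_of_mem_aut hg]
  · exact (hg.2 v hv).2

lemma apply_mem_desc_of_mem_aut (hg : g ∈ T.Aut) {u x : T.V} (hx : x ∈ T.Desc u) :
    g x ∈ T.Desc (g u) := by
  obtain ⟨n, rfl⟩ := hx
  refine ⟨n, ?_⟩
  induction n with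
  | zero => rfl
  | succ n ih =>
    rw [Function.iterate_succ_apply', ih, parent_apply_of_mem_aut hg,
      Function.iterate_succ_apply']

lemma firstLevel_apply_of_mem_aut (hg : g ∈ T.Aut) {v : T.V} (hv : T.FirstLevel v) :
    T.FirstLevel (g v) :=
  ⟨(hg.2 v hv.1).1, by rw [parent_apply_of_mem_aut hg, hv.2, apply_root_of_mem_aut hg]⟩

lemma internal_apply_of_mem_aut (hg : g ∈ T.Aut) {u : T.V} (hu : T.Internal u) :
    T.Internal (g u) := by
  obtain ⟨w, hw, rfl⟩ := hu
  exact ⟨g w, (hg.2 w hw).1, parent_apply_of_mem_aut hg w⟩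

lemma internal_apply_iff_of_mem_aut (hg : g ∈ T.Aut) {u : T.V} :
    T.Internal (g u) ↔ T.Internal u :=
  ⟨fun h => by simpa using internal_apply_of_mem_aut (inv_mem hg) h,
    internal_apply_of_mem_aut hg⟩

lemma isSubtreeIso_of_mem_aut (hg : g ∈ T.Aut) (u : T.V) : IsSubtreeIso T T u (g u) g := by
  refine ⟨rfl, ⟨fun x => apply_mem_desc_of_mem_aut hg, g.injective.injOn, fun y hy => ?_⟩,
    fun x _ hxu => ⟨g.injective.ne hxu, parent_apply_of_mem_aut hg x⟩⟩
  exact ⟨g⁻¹ y, by simpa using apply_mem_desc_of_mem_aut (inv_mem hg) hy, by simp⟩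

theorem exists_mem_aut_eqOn_desc {s : Equiv.Perm T.V} (hs : s ∈ T.Aut)
    (F : T.V → T.V → T.V) (hF : ∀ w, T.FirstLevel w → IsSubtreeIso T T w (s w) (F w)) :
    ∃ t ∈ T.Aut, ∀ w, T.FirstLevel w → Set.EqOn t (F w) (T.Desc w) := by
  choose! anc hanc using fun x (hx : x ≠ T.root) => exists_firstLevel_mem_desc hx
  let f x := if x = T.root then T.root else F (anc x) x
  have hf : ∀ w, T.FirstLevel w → Set.EqOn f (F w) (T.Desc w) := by
    intro w hw x hx
    have hxr := ne_root_of_mem_desc hw.1 hx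
    simp only [f, if_neg hxr, eq_of_mem_desc_of_firstLevel (hanc x hxr).1 hw (hanc x hxr).2 hx]
  have hsurj : Function.Surjective f := by
    intro y
    by_cases hy : y = T.root
    · exact ⟨T.root, by simp [f, hy]⟩
    obtain ⟨w', hw', hyw'⟩ := exists_firstLevel_mem_desc hy
    have hw := firstLevel_apply_of_mem_aut (inv_mem hs) hw'
    rw [show w' = s (s⁻¹ w') by simp] at hyw'
    obtain ⟨x, hx, rfl⟩ := (hF _ hw).2.1.surjOn hyw'
    exact ⟨x, hf _ hw hx⟩
  refine ⟨Equiv.ofBijective f (Finite.surjective_iff_bijective.mp hsurj),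
    ⟨if_pos rfl, fun x hx => ?_⟩, hf⟩
  obtain ⟨hw, hxw⟩ := hanc x hx
  have hsw := firstLevel_apply_of_mem_aut hs hw
  have hfx : f x ∈ T.Desc (s (anc x)) := hf _ hw hxw ▸ (hF _ hw).2.1.mapsTo hxw
  refine ⟨ne_root_of_mem_desc hsw.1 hfx, ?_⟩
  change T.parent (f x) = f (T.parent x)
  by_cases hxa : x = anc x
  · have hroot : f T.root = T.root := if_pos rfl
    have hpx : T.parent x = T.root := by rw [hxa]; exact hw.2
    rw [hf _ hw hxw, (congrArg _ hxa).trans (hF _ hw).1, hsw.2, hpx, hroot]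
  · rw [hf _ hw hxw, hf _ hw (parent_mem_desc hxw hxa)]
    exact ((hF _ hw).2.2 x hxw hxa).2

theorem exists_conj_eq_of_internal_pieces {g g' s : Equiv.Perm T.V} (hg : g ∈ T.Aut)
    (hg' : g' ∈ T.Aut) (hs : s ∈ T.Aut) (hπ : ∀ v, T.FirstLevel v → g' (s v) = s (g v))
    (F : T.V → T.V → T.V)
    (hF : ∀ w, T.FirstLevel w → T.Internal w → IsSubtreeIso T T w (s w) (F w))
    (hFg : ∀ w, T.FirstLevel w → T.Internal w → ∀ x ∈ T.Desc w, F (g w) (g x) = g' (F w x)) :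
    ∃ t ∈ T.Aut, t * g * t⁻¹ = g' := by
  classical
  obtain ⟨t, ht, htF⟩ := exists_mem_aut_eqOn_desc hs (fun w => if T.Internal w then F w else s)
    fun w hw => by
      split_ifs with hi
      exacts [hF w hw hi, isSubtreeIso_of_mem_aut hs w]
  refine ⟨t, ht, mul_inv_eq_iff_eq_mul.mpr (Equiv.ext fun x => ?_)⟩
  simp only [Equiv.Perm.mul_apply]
  by_cases hx : x = T.root
  · rw [hx, apply_root_of_mem_aut hg, apply_root_of_mem_aut ht, apply_root_of_mem_aut hg']
  obtain ⟨w, hw, hxw⟩ := exists_firstLevel_mem_desc hx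
  rw [htF w hw hxw, htF _ (firstLevel_apply_of_mem_aut hg hw) (apply_mem_desc_of_mem_aut hg hxw)]
  by_cases hi : T.Internal w
  · simp only [if_pos hi, if_pos (internal_apply_of_mem_aut hg hi)]
    exact hFg w hw hi x hxw
  · obtain rfl := eq_of_mem_desc_of_isLeaf hw.1 hi hxw
    simp only [if_neg hi, if_neg (mt (internal_apply_iff_of_mem_aut hg).mp hi)]
    exact (hπ x hw).symm

lemma pow_apply_comm_of_firstLevel {g g' s : Equiv.Perm T.V}
    (hg : g ∈ T.Aut) (hπ : ∀ v, T.FirstLevel v → g' (s v) = s (g v)) {p : T.V}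
    (hp : T.FirstLevel p) (n : ℕ) : s ((g ^ n) p) = (g' ^ n) (s p) := by
  induction n with
  | zero => rfl
  | succ n ih =>
    rw [pow_succ', Equiv.Perm.mul_apply, ← hπ _ (firstLevel_apply_of_mem_aut (pow_mem hg n) hp),
      ih, pow_succ', Equiv.Perm.mul_apply]

end FRTree

open FRTree

lemma Equiv.Perm.exists_representative_fun {α : Type*} [Finite α] {g : Equiv.Perm α}
    {U : Set α} {P : α → Prop} (hP : ∀ w, P w → P (g w))
    (hrep : ∀ w, P w → ∃ v ∈ U, ∃ n : ℕ, (g ^ n) v = w)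
    (hU : ∀ v ∈ U, ∀ v' ∈ U, (∃ n : ℕ, (g ^ n) v = v') → v = v') :
    ∃ (rep : α → α) (e : α → ℕ), ∀ w, P w →
      rep w ∈ U ∧ (g ^ e w) (rep w) = w ∧ rep (g w) = rep w := by
  choose! rep hrepU e he using hrep
  refine ⟨rep, e, fun w hw => ⟨hrepU w hw, he w hw, ?_⟩⟩
  have hsame : g.SameCycle ((g ^ (e w + 1)) (rep w)) ((g ^ e (g w)) (rep (g w))) := by
    rw [pow_succ', Equiv.Perm.mul_apply, he w hw, he (g w) (hP w hw)]
  exact (hU _ (hrepU w hw) _ (hrepU _ (hP w hw)) (Equiv.Perm.sameCycle_pow_left.mp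
    (Equiv.Perm.sameCycle_pow_right.mp hsame)).exists_nat_pow_eq).symm

def orbitExtension {α : Type*} (g g' : Equiv.Perm α) (τ : α → α) (n : ℕ) : α → α :=
  ⇑(g' ^ n) ∘ τ ∘ ⇑(g ^ n)⁻¹

lemma orbitExtension_succ_apply {α : Type*} (g g' : Equiv.Perm α) (τ : α → α) (n : ℕ) (x : α) :
    orbitExtension g g' τ (n + 1) (g x) = g' (orbitExtension g g' τ n x) := by
  simp [orbitExtension, pow_succ', mul_inv_rev]

section OrbitExtension

variable {T : FRTree} {g g' : Equiv.Perm T.V}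

lemma isSubtreeIso_orbitExtension (hg : g ∈ T.Aut) (hg' : g' ∈ T.Aut) {v v' : T.V}
    {τ : T.V → T.V} (hτ : IsSubtreeIso T T v v' τ) (n : ℕ) :
    IsSubtreeIso T T ((g ^ n) v) ((g' ^ n) v') (orbitExtension g g' τ n) := by
  have h := isSubtreeIso_of_mem_aut (inv_mem (pow_mem hg n)) ((g ^ n) v)
  simp only [Equiv.Perm.coe_inv, Equiv.symm_apply_apply] at h
  exact (isSubtreeIso_of_mem_aut (pow_mem hg' n) v').comp (hτ.comp h)

variable {v : T.V} {τ : T.V → T.V}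

lemma pow_apply_comm_of_pow_apply_eq_self (hg : g ∈ T.Aut)
    (hτ : ∀ x ∈ T.Desc v, τ ((g ^ minimalPeriod g v) x) = (g' ^ minimalPeriod g v) (τ x))
    {m : ℕ} (hm : (g ^ m) v = v) : ∀ x ∈ T.Desc v, τ ((g ^ m) x) = (g' ^ m) (τ x) := by
  set ℓ := minimalPeriod g v
  have hℓ : (g ^ ℓ) v = v := by
    rw [← Equiv.Perm.iterate_eq_pow]
    exact iterate_minimalPeriod
  obtain ⟨k, rfl⟩ : ℓ ∣ m := IsPeriodicPt.minimalPeriod_dvd <| by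
    rwa [IsPeriodicPt, IsFixedPt, Equiv.Perm.iterate_eq_pow]
  clear hm
  induction k with
  | zero => simp
  | succ k ih =>
    intro x hx
    have hx' : (g ^ ℓ) x ∈ T.Desc v := hℓ ▸ apply_mem_desc_of_mem_aut (pow_mem hg ℓ) hx
    rw [mul_add_one, pow_add, pow_add, Equiv.Perm.mul_apply, Equiv.Perm.mul_apply, ih _ hx',
      hτ x hx]

lemma orbitExtension_eqOn_of_pow_apply_eq (hg : g ∈ T.Aut)
    (hτ : ∀ x ∈ T.Desc v, τ ((g ^ minimalPeriod g v) x) = (g' ^ minimalPeriod g v) (τ x))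
    {a b : ℕ} (hab : (g ^ a) v = (g ^ b) v) :
    Set.EqOn (orbitExtension g g' τ a) (orbitExtension g g' τ b) (T.Desc ((g ^ a) v)) := by
  wlog hle : a ≤ b generalizing a b
  · intro y hy
    exact (this hab.symm (le_of_not_ge hle) (hab ▸ hy)).symm
  obtain ⟨m, rfl⟩ := Nat.exists_eq_add_of_le hle
  have hm : (g ^ m) v = v :=
    (g ^ a).injective (by rw [← Equiv.Perm.mul_apply, ← pow_add, hab])
  intro y hy
  rw [hab] at hy
  have hz : (g ^ (a + m))⁻¹ y ∈ T.Desc v := by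
    simpa using apply_mem_desc_of_mem_aut (inv_mem (pow_mem hg (a + m))) hy
  have hy' : (g ^ a)⁻¹ y = (g ^ m) ((g ^ (a + m))⁻¹ y) := by
    simp [pow_add, mul_inv_rev]
  simp only [orbitExtension, Function.comp_apply]
  rw [hy', pow_apply_comm_of_pow_apply_eq_self hg hτ hm _ hz, ← Equiv.Perm.mul_apply, ← pow_add]

lemma orbitExtension_apply_comm (hg : g ∈ T.Aut)
    (hτ : ∀ x ∈ T.Desc v, τ ((g ^ minimalPeriod g v) x) = (g' ^ minimalPeriod g v) (τ x))
    {a b : ℕ} {w x : T.V} (hw : (g ^ a) v = w) (hgw : (g ^ b) v = g w) (hx : x ∈ T.Desc w) :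
    orbitExtension g g' τ b (g x) = g' (orbitExtension g g' τ a x) := by
  subst hw
  have hab : (g ^ b) v = (g ^ (a + 1)) v := by rw [hgw, pow_succ', Equiv.Perm.mul_apply]
  have hgx : g x ∈ T.Desc ((g ^ b) v) := hgw ▸ apply_mem_desc_of_mem_aut hg hx
  rw [orbitExtension_eqOn_of_pow_apply_eq hg hτ hab hgx, orbitExtension_succ_apply]

end OrbitExtension

/-- **Lemma (conjugacy criterion).**  `g` and `g'` are conjugate in `Aut T` if and only
if their restrictions to the first level are conjugate by the restriction `σ` of some
automorphism `s` and, for every representative `v` of the `⟨π⟩`-orbits on the internal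
first-level vertices, the automorphisms `[g^ℓ]_v` of `T_v` and `[(g')^ℓ]_{σ v}` of
`T_{σ v}` are conjugate by an isomorphism `T_v → T_{σ v}` (here `ℓ` is the length of
the orbit of `v`, i.e. the minimal period of `v` under `g`). -/
theorem conjugacy_criterion
    (T : FRTree) (g g' : Equiv.Perm T.V) (hg : g ∈ T.Aut) (hg' : g' ∈ T.Aut)
    (U : Set T.V)
    (hU1 : ∀ v ∈ U, T.FirstLevel v ∧ T.Internal v)
    (hU2 : ∀ w : T.V, T.FirstLevel w → T.Internal w → ∃ v ∈ U, ∃ n : ℕ, (g ^ n) v = w)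
    (hU3 : ∀ v ∈ U, ∀ v' ∈ U, (∃ n : ℕ, (g ^ n) v = v') → v = v') :
    (∃ t ∈ T.Aut, t * g * t⁻¹ = g') ↔
      ∃ s ∈ T.Aut,
        (∀ v : T.V, T.FirstLevel v → g' (s v) = s (g v)) ∧
        ∀ v ∈ U, ∃ τ : T.V → T.V, IsSubtreeIso T T v (s v) τ ∧
          ∀ w ∈ T.Desc v,
            τ ((g ^ Function.minimalPeriod (⇑g) v) w) =
              (g' ^ Function.minimalPeriod (⇑g) v) (τ w) := by
  constructor
  · rintro ⟨t, ht, rfl⟩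
    have hconj : ∀ n x, ((t * g * t⁻¹) ^ n) (t x) = t ((g ^ n) x) := by simp [conj_pow]
    exact ⟨t, ht, fun v _ => by simp,
      fun v _ => ⟨t, isSubtreeIso_of_mem_aut ht v, fun x _ => (hconj _ x).symm⟩⟩
  · rintro ⟨s, hs, hπ, hτ⟩
    choose! τ hτiso hτ using hτ
    obtain ⟨rep, e, hrep⟩ := Equiv.Perm.exists_representative_fun
      (P := fun w => T.FirstLevel w ∧ T.Internal w)
      (fun w hw => ⟨firstLevel_apply_of_mem_aut hg hw.1, internal_apply_of_mem_aut hg hw.2⟩)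
      (fun w hw => hU2 w hw.1 hw.2) hU3
    refine exists_conj_eq_of_internal_pieces hg hg' hs hπ
      (fun w => orbitExtension g g' (τ (rep w)) (e w)) (fun w hw hi => ?_) (fun w hw hi x hx => ?_)
    · obtain ⟨hU, hw_eq, -⟩ := hrep w ⟨hw, hi⟩
      have h := isSubtreeIso_orbitExtension hg hg' (hτiso _ hU) (e w)
      rwa [← pow_apply_comm_of_firstLevel hg hπ (hU1 _ hU).1, hw_eq] at h
    · obtain ⟨hU, hw_eq, hrep_g⟩ := hrep w ⟨hw, hi⟩
      have hgw_eq := (hrep (g w) ⟨firstLevel_apply_of_mem_aut hg hw,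
        internal_apply_of_mem_aut hg hi⟩).2.1
      rw [hrep_g] at hgw_eq ⊢
      exact orbitExtension_apply_comm hg (hτ _ hU) hw_eq hgw_eq hx
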